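/- arXiv:cs/0505014 — 2 statements merged into one kernel-verified Lean document; each statement's English description precedes it below -/
import Mathlib

section
/- For any two interval neutrosophic sets A and B: (1) △(A ∪ B) ⊆ △A ∪ △B; (2) △A ∩ △B ⊆ △(A ∩ B); (3) ∇A ∪ ∇B ⊆ ∇(A ∪ B); (4) ∇(A ∩ B) ⊆ ∇A ∩ ∇B. -/
structure INS (X : Type*) where
  tinf : X → ℝ
  tsup : X → ℝ
  iinf : X → ℝ
  isup : X → ℝ
  finf : X → ℝ
  fsup : X → ℝ
  bounds : ∀ x, 0 ≤ tinf x ∧ tsup x ≤ 1 ∧ tinf x ≤ tsup x ∧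
    0 ≤ iinf x ∧ isup x ≤ 1 ∧ iinf x ≤ isup x ∧
    0 ≤ finf x ∧ fsup x ≤ 1 ∧ finf x ≤ fsup x

/-- Containment of interval neutrosophic sets. -/
def INS.subset {X : Type*} (A B : INS X) : Prop :=
  ∀ x, A.tinf x ≤ B.tinf x ∧ A.tsup x ≤ B.tsup x ∧
    B.iinf x ≤ A.iinf x ∧ B.isup x ≤ A.isup x ∧
    B.finf x ≤ A.finf x ∧ B.fsup x ≤ A.fsup x

/-- Union of interval neutrosophic sets. -/
def INS.union {X : Type*} (A B : INS X) : INS X where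
  tinf x := max (A.tinf x) (B.tinf x)
  tsup x := max (A.tsup x) (B.tsup x)
  iinf x := min (A.iinf x) (B.iinf x)
  isup x := min (A.isup x) (B.isup x)
  finf x := min (A.finf x) (B.finf x)
  fsup x := min (A.fsup x) (B.fsup x)
  bounds x := by
    obtain ⟨a1, a2, a3, a4, a5, a6, a7, a8, a9⟩ := A.bounds x
    obtain ⟨b1, b2, b3, b4, b5, b6, b7, b8, b9⟩ := B.bounds x
    exact ⟨le_max_of_le_left a1, max_le a2 b2, max_le_max a3 b3,
      le_min a4 b4, min_le_of_left_le a5, min_le_min a6 b6,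
      le_min a7 b7, min_le_of_left_le a8, min_le_min a9 b9⟩

/-- Intersection of interval neutrosophic sets. -/
def INS.inter {X : Type*} (A B : INS X) : INS X where
  tinf x := min (A.tinf x) (B.tinf x)
  tsup x := min (A.tsup x) (B.tsup x)
  iinf x := max (A.iinf x) (B.iinf x)
  isup x := max (A.isup x) (B.isup x)
  finf x := max (A.finf x) (B.finf x)
  fsup x := max (A.fsup x) (B.fsup x)
  bounds x := by
    obtain ⟨a1, a2, a3, a4, a5, a6, a7, a8, a9⟩ := A.bounds x
    obtain ⟨b1, b2, b3, b4, b5, b6, b7, b8, b9⟩ := B.bounds x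
    exact ⟨le_min a1 b1, min_le_of_left_le a2, min_le_min a3 b3,
      le_max_of_le_left a4, max_le a5 b5, max_le_max a6 b6,
      le_max_of_le_left a7, max_le a8 b8, max_le_max a9 b9⟩

/-- Truth-favorite operator. -/
def INS.tf {X : Type*} (A : INS X) : INS X where
  tinf x := min (A.tinf x + A.iinf x) 1
  tsup x := min (A.tsup x + A.isup x) 1
  iinf _ := 0
  isup _ := 0
  finf x := A.finf x
  fsup x := A.fsup x
  bounds x := by
    obtain ⟨a1, a2, a3, a4, a5, a6, a7, a8, a9⟩ := A.bounds x
    exact ⟨le_min (by linarith) zero_le_one, min_le_right _ _,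
      min_le_min (by linarith) le_rfl, le_rfl, zero_le_one, le_rfl, a7, a8, a9⟩

/-- False-favorite operator. -/
def INS.ff {X : Type*} (A : INS X) : INS X where
  tinf x := A.tinf x
  tsup x := A.tsup x
  iinf _ := 0
  isup _ := 0
  finf x := min (A.finf x + A.iinf x) 1
  fsup x := min (A.fsup x + A.isup x) 1
  bounds x := by
    obtain ⟨a1, a2, a3, a4, a5, a6, a7, a8, a9⟩ := A.bounds x
    exact ⟨a1, a2, a3, le_rfl, zero_le_one, le_rfl,
      le_min (by linarith) zero_le_one, min_le_right _ _,
      min_le_min (by linarith) le_rfl⟩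


private lemma ins_l1 (a b c d : ℝ) :
    min (max a b + min c d) 1 ≤ max (min (a + c) 1) (min (b + d) 1) := by
  rcases le_total a b with h | h
  · exact le_max_of_le_right (min_le_min (by have := min_le_right c d; have := max_le h (le_refl b); linarith) le_rfl)
  · exact le_max_of_le_left (min_le_min (by have := min_le_left c d; have := max_le (le_refl a) h; linarith) le_rfl)

private lemma ins_l2 (a b c d : ℝ) :
    min (min (a + c) 1) (min (b + d) 1) ≤ min (min a b + max c d) 1 := by
  rcases le_total a b with h | h
  · refine le_min ?_ ((min_le_left _ _).trans (min_le_right _ _))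
    have h1 : min a b = a := min_eq_left h
    have := le_max_left c d
    calc min (min (a+c) 1) (min (b+d) 1) ≤ a + c := (min_le_left _ _).trans (min_le_left _ _)
    _ ≤ min a b + max c d := by rw [h1]; linarith
  · refine le_min ?_ ((min_le_left _ _).trans (min_le_right _ _))
    have h1 : min a b = b := min_eq_right h
    have := le_max_right c d
    calc min (min (a+c) 1) (min (b+d) 1) ≤ b + d := (min_le_right _ _).trans (min_le_left _ _)
    _ ≤ min a b + max c d := by rw [h1]; linarith

private lemma ins_l3 (a b c d : ℝ) :
    min (min a b + min c d) 1 ≤ min (min (a + c) 1) (min (b + d) 1) := by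
  refine le_min (min_le_min ?_ le_rfl) (min_le_min ?_ le_rfl)
  · have := min_le_left a b; have := min_le_left c d; linarith
  · have := min_le_right a b; have := min_le_right c d; linarith

private lemma ins_l4 (a b c d : ℝ) :
    max (min (a + c) 1) (min (b + d) 1) ≤ min (max a b + max c d) 1 := by
  refine max_le (min_le_min ?_ le_rfl) (min_le_min ?_ le_rfl)
  · have := le_max_left a b; have := le_max_left c d; linarith
  · have := le_max_right a b; have := le_max_right c d; linarith

/-- Interaction of the truth-favorite `△` and false-favorite `∇` operators with
union and intersection. -/
theorem INS.tf_ff_union_inter {X : Type*} (A B : INS X) :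
    ((A.union B).tf).subset ((A.tf).union (B.tf)) ∧
    ((A.tf).inter (B.tf)).subset ((A.inter B).tf) ∧
    ((A.ff).union (B.ff)).subset ((A.union B).ff) ∧
    ((A.inter B).ff).subset ((A.ff).inter (B.ff)) := by
  refine ⟨fun x => ?_, fun x => ?_, fun x => ?_, fun x => ?_⟩ <;>
    simp only [INS.union, INS.inter, INS.tf, INS.ff]
  · exact ⟨ins_l1 _ _ _ _, ins_l1 _ _ _ _, by simp, by simp, le_rfl, le_rfl⟩
  · exact ⟨ins_l2 _ _ _ _, ins_l2 _ _ _ _, by simp, by simp, le_rfl, le_rfl⟩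
  · exact ⟨le_rfl, le_rfl, by simp, by simp, ins_l3 _ _ _ _, ins_l3 _ _ _ _⟩
  · exact ⟨le_rfl, le_rfl, by simp, by simp, ins_l4 _ _ _ _, ins_l4 _ _ _ _⟩
end

section
/- The generalized union operator on neutrosophic relations is a strong generalization of union on fuzzy relations: for consistent neutrosophic relations R and S on the same scheme, reps(R ∪̂ S) = S(∪)(reps(R), reps(S)), where the right side is the set of all pointwise-max unions r ∪ s with r ∈ reps(R), s ∈ reps(S). -/
/-- A fuzzy relation on the set `τ` of tuples over a scheme. -/
def FRel (τ : Type*) := τ → ℝ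

/-- A neutrosophic relation: each tuple gets a belief and a doubt factor. -/
def NRel (τ : Type*) := τ → ℝ × ℝ

/-- Belief and doubt factors lie in `[0,1]`. -/
def NRel.InBounds {τ : Type*} (R : NRel τ) : Prop :=
  ∀ t, (R t).1 ∈ Set.Icc (0:ℝ) 1 ∧ (R t).2 ∈ Set.Icc (0:ℝ) 1

/-- A neutrosophic relation is consistent if belief + doubt ≤ 1. -/
def NRel.Consistent {τ : Type*} (R : NRel τ) : Prop := ∀ t, (R t).1 + (R t).2 ≤ 1

/-- A neutrosophic relation is total if belief + doubt = 1. -/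
def NRel.Total {τ : Type*} (R : NRel τ) : Prop := ∀ t, (R t).1 + (R t).2 = 1

/-- The fuzzy relation `λ_Σ(R)` associated to a (total) neutrosophic relation. -/
def NRel.lam {τ : Type*} (R : NRel τ) : FRel τ := fun t => (R t).1

/-- The set of fuzzy-relation representations of a consistent neutrosophic
relation. -/
def NRel.reps {τ : Type*} (R : NRel τ) : Set (FRel τ) :=
  {Q | ∀ t, (R t).1 ≤ Q t ∧ Q t ≤ 1 - (R t).2}

/-- Generalized union of neutrosophic relations. -/
def NRel.union {τ : Type*} (R S : NRel τ) : NRel τ :=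
  fun t => (max (R t).1 (S t).1, min (R t).2 (S t).2)

/-- Union of fuzzy relations. -/
def FRel.union {τ : Type*} (r s : FRel τ) : FRel τ := fun t => max (r t) (s t)

/-- The generalized union is a strong generalization of fuzzy union:
`reps (R ∪̂ S) = S(∪)(reps R, reps S)` for consistent `R`, `S`. -/
theorem reps_union {τ : Type*} (R S : NRel τ)
    (hR : R.Consistent) (hS : S.Consistent) :
    (R.union S).reps = {q | ∃ r ∈ R.reps, ∃ s ∈ S.reps, q = r.union s} := by
  ext Q
  constructor
  · intro hQ
    refine ⟨fun t => min (Q t) (1 - (R t).2), fun t => ?_,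
            fun t => min (Q t) (1 - (S t).2), fun t => ?_, ?_⟩
    · obtain ⟨h1, h2⟩ := hQ t
      refine ⟨le_min (le_trans (le_max_left _ _) h1) (by linarith [hR t]), min_le_right _ _⟩
    · obtain ⟨h1, h2⟩ := hQ t
      refine ⟨le_min (le_trans (le_max_right _ _) h1) (by linarith [hS t]), min_le_right _ _⟩
    · funext t
      obtain ⟨h1, h2⟩ := hQ t
      simp only [FRel.union, NRel.union, NRel.reps] at *
      rcases le_total (R t).2 (S t).2 with h | h <;>
        simp [min_eq_left, min_eq_right, h] at h2 ⊢ <;>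
        rcases le_total (Q t) (1 - (R t).2) with h3 | h3 <;>
        rcases le_total (Q t) (1 - (S t).2) with h4 | h4 <;>
        simp [min_eq_left, min_eq_right, *] <;> linarith
  · rintro ⟨r, hr, s, hs, rfl⟩ t
    obtain ⟨hr1, hr2⟩ := hr t
    obtain ⟨hs1, hs2⟩ := hs t
    constructor
    · exact max_le_max hr1 hs1
    · simp only [FRel.union, NRel.union]
      rcases le_total (r t) (s t) with h | h <;> rcases le_total (R t).2 (S t).2 with h2 | h2 <;>
        simp [max_eq_left, max_eq_right, min_eq_left, min_eq_right, h, h2] <;> linarith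
end
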